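/- Let H be a d×d complex Hermitian matrix with spectral decomposition H = Σ_{i=1}^M λ_i Π_i (eigenvalues ordered increasingly, nonzero pairwise-orthogonal Hermitian projections summing to the identity), and let β ≥ 0. Then the fidelity between the thermal state e^{−βH}/Tr[e^{−βH}] and the normalized ground-space projector Π_1/Tr[Π_1] is at least 1/(1 + e^{−βΔ}·(d − d_G)/d_G), where Δ := λ_2 − λ_1 and d_G := Tr[Π_1]. -/

import Mathlib

open Matrix
open scoped ComplexOrder

/-- Positive semidefinite square root (junk value `0` off the PSD matrices). -/
noncomputable def msqrt {d : ℕ} (A : Matrix (Fin d) (Fin d) ℂ) : Matrix (Fin d) (Fin d) ℂ :=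
  open scoped Classical in
  if h : A.PosSemidef then
    (h.1.eigenvectorUnitary : Matrix (Fin d) (Fin d) ℂ) *
      diagonal ((↑) ∘ Real.sqrt ∘ h.1.eigenvalues) *
      (star h.1.eigenvectorUnitary : Matrix (Fin d) (Fin d) ℂ) else 0

/-- Fidelity `F(ρ,σ) = (Tr[√(√σ ρ √σ)])²`. -/
noncomputable def fidelity {d : ℕ} (ρ σ : Matrix (Fin d) (Fin d) ℂ) : ℝ :=
  ((msqrt (msqrt σ * ρ * msqrt σ)).trace.re) ^ 2

lemma proj_posSemidef {d : ℕ} {Q : Matrix (Fin d) (Fin d) ℂ}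
    (hherm : Q.IsHermitian) (hidem : Q * Q = Q) : Q.PosSemidef := by
  have h : Q = Qᴴ * Q := by rw [hherm.eq, hidem]
  rw [h]; exact posSemidef_conjTranspose_mul_self Q

lemma smul_posSemidef {d : ℕ} {c : ℝ} (hc : 0 ≤ c) {Q : Matrix (Fin d) (Fin d) ℂ}
    (hQ : Q.PosSemidef) : ((c : ℂ) • Q).PosSemidef := by
  refine ⟨?_, fun x => ?_⟩
  · unfold Matrix.IsHermitian
    rw [conjTranspose_smul, hQ.1.eq]
    congr 1
    simp [Complex.ext_iff]
  · have := hQ.2 x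
    exact (hQ.smul (Complex.zero_le_real.mpr hc)).2 x

lemma psd_trace_nonneg {d : ℕ} {Q : Matrix (Fin d) (Fin d) ℂ} (hQ : Q.PosSemidef) :
    0 ≤ Q.trace := by
  exact hQ.trace_nonneg

lemma msqrt_smul_proj {d : ℕ} {c : ℝ} (hc : 0 ≤ c) {Q : Matrix (Fin d) (Fin d) ℂ}
    (hherm : Q.IsHermitian) (hidem : Q * Q = Q) :
    msqrt ((c : ℂ) • Q) = ((Real.sqrt c : ℝ) : ℂ) • Q := by
  have hQ := proj_posSemidef hherm hidem
  have hA : ((c : ℂ) • Q).PosSemidef := smul_posSemidef hc hQ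
  rw [msqrt, dif_pos hA]
  set A := (c:ℂ) • Q with hAdef
  have hAA : A * A = (c:ℂ) • A := by
    rw [hAdef, smul_mul_smul_comm, hidem, smul_smul]
  set U : Matrix (Fin d) (Fin d) ℂ := (hA.1.eigenvectorUnitary : Matrix (Fin d) (Fin d) ℂ) with hU
  set μ := hA.1.eigenvalues with hμ
  have hspec : A = U * diagonal (((↑) : ℝ → ℂ) ∘ μ) * star U := by
    have := hA.1.spectral_theorem
    rw [Unitary.conjStarAlgAut_apply] at this
    exact this
  have hUU : star U * U = 1 := Unitary.coe_star_mul_self _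
  have hUU' : U * star U = 1 := Unitary.coe_mul_star_self _
  have hD : diagonal (((↑) : ℝ → ℂ) ∘ μ) * diagonal (((↑) : ℝ → ℂ) ∘ μ)
      = (c:ℂ) • diagonal (((↑) : ℝ → ℂ) ∘ μ) := by
    have e : diagonal (((↑) : ℝ → ℂ) ∘ μ) = star U * A * U := by
      rw [hspec]
      simp only [Matrix.mul_assoc, hUU, Matrix.mul_one]
      rw [← Matrix.mul_assoc, hUU, Matrix.one_mul]
    rw [e, show star U * A * U * (star U * A * U) = star U * A * (U * star U) * A * U by
      simp only [Matrix.mul_assoc], hUU', Matrix.mul_one, Matrix.mul_assoc (star U) A A, hAA,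
      Matrix.mul_smul, Matrix.smul_mul]
  have hkey : ∀ k, μ k = c ∨ μ k = 0 := by
    intro k
    have h1 := congrFun (congrFun hD k) k
    simp only [diagonal_mul_diagonal, Matrix.smul_apply, diagonal_apply_eq, Function.comp_apply,
      smul_eq_mul] at h1
    have h2 : μ k * μ k = c * μ k := by exact_mod_cast h1
    exact mul_eq_mul_right_iff.mp h2
  have hdiag : diagonal (((↑) : ℝ → ℂ) ∘ Real.sqrt ∘ μ)
      = ((Real.sqrt c / c : ℝ) : ℂ) • diagonal (((↑) : ℝ → ℂ) ∘ μ) := by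
    rw [← diagonal_smul]
    congr 1
    funext k
    simp only [Function.comp_apply, Pi.smul_apply, smul_eq_mul]
    rw [← Complex.ofReal_mul]
    congr 1
    rcases hkey k with h | h <;> rw [h]
    · rcases eq_or_lt_of_le hc with h0 | h0
      · subst h0; simp
      · field_simp
    · simp
  rw [hdiag, Matrix.mul_smul, Matrix.smul_mul, ← hspec, hAdef, smul_smul, ← Complex.ofReal_mul]
  congr 2
  rcases eq_or_lt_of_le hc with h0 | h0
  · subst h0; simp
  · field_simp

lemma pow_spectral {d M : ℕ} (c : Fin M → ℂ) (P : Fin M → Matrix (Fin d) (Fin d) ℂ)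
    (hPorth : ∀ i j, P i * P j = if i = j then P i else 0)
    (hPsum : ∑ i, P i = 1) (n : ℕ) :
    (∑ i, c i • P i) ^ n = ∑ i, (c i ^ n) • P i := by
  induction n with
  | zero => simp [hPsum]
  | succ n ih =>
    rw [pow_succ, ih, Finset.sum_mul_sum]
    rw [Finset.sum_comm]
    refine Finset.sum_congr rfl fun j _ => ?_
    have : ∀ i ∈ Finset.univ, (c i ^ n • P i) * (c j • P j) =
        if i = j then (c j ^ (n+1)) • P j else 0 := by
      intro i _
      rw [smul_mul_smul_comm, hPorth i j]
      split_ifs with h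
      · subst h; rw [pow_succ]
      · simp
    rw [Finset.sum_congr rfl this, Finset.sum_ite_eq' Finset.univ j, if_pos (Finset.mem_univ j)]

lemma exp_spectral {d M : ℕ} (c : Fin M → ℂ) (P : Fin M → Matrix (Fin d) (Fin d) ℂ)
    (hPorth : ∀ i j, P i * P j = if i = j then P i else 0)
    (hPsum : ∑ i, P i = 1) :
    NormedSpace.exp (∑ i, c i • P i) = ∑ i, Complex.exp (c i) • P i := by
  rw [NormedSpace.exp_eq_tsum ℂ]
  simp only [pow_spectral c P hPorth hPsum]
  have hsum : ∀ i : Fin M, Summable (fun n : ℕ => ((n.factorial : ℂ)⁻¹ * c i ^ n)) := by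
    intro i
    have := NormedSpace.expSeries_summable' (𝕂 := ℂ) (c i)
    simpa [div_eq_inv_mul, NormedSpace.expSeries_apply_eq', funext_iff] using this
  calc (∑' n : ℕ, ((n.factorial : ℂ)⁻¹) • ∑ i, (c i ^ n) • P i)
      = ∑' n : ℕ, ∑ i, (((n.factorial : ℂ)⁻¹ * c i ^ n)) • P i := by
        congr 1; funext n; rw [Finset.smul_sum]; simp [smul_smul]
    _ = ∑ i, ∑' n : ℕ, (((n.factorial : ℂ)⁻¹ * c i ^ n)) • P i := by
        refine Summable.tsum_finsetSum fun i _ => ?_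
        exact (hsum i).smul_const _
    _ = ∑ i, Complex.exp (c i) • P i := by
        refine Finset.sum_congr rfl fun i _ => ?_
        rw [(hsum i).tsum_smul_const]
        congr 1
        rw [Complex.exp_eq_exp_ℂ, NormedSpace.exp_eq_tsum ℂ]
        simp [smul_eq_mul]

set_option maxHeartbeats 1000000 in
/-- lower bound on the fidelity between the thermal state and the normalized
ground-space projector, in terms of the spectral gap. -/
theorem fidelity_thermal_ground_ge
    {d M : ℕ} (hd : 1 ≤ d) (hM : 2 ≤ M)
    (lam : Fin M → ℝ) (hlam : Monotone lam)
    (P : Fin M → Matrix (Fin d) (Fin d) ℂ)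
    (hPne : ∀ i, P i ≠ 0)
    (hPherm : ∀ i, (P i).IsHermitian)
    (hPorth : ∀ i j, P i * P j = if i = j then P i else 0)
    (hPsum : ∑ i, P i = 1)
    (H : Matrix (Fin d) (Fin d) ℂ)
    (hH : H = ∑ i, (lam i : ℂ) • P i)
    (i0 : Fin M) (hi0 : i0 = ⟨0, by omega⟩)
    (i1 : Fin M) (hi1 : i1 = ⟨1, by omega⟩)
    (dG : ℕ) (hdGpos : 0 < dG) (hdG : (P i0).trace = (dG : ℂ))
    (β : ℝ) (hβ : 0 ≤ β) :
    fidelity (((NormedSpace.exp ((-(β : ℂ)) • H)).trace)⁻¹ •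
          NormedSpace.exp ((-(β : ℂ)) • H))
        (((P i0).trace)⁻¹ • P i0) ≥
      1 / (1 + Real.exp (-(β * (lam i1 - lam i0))) * (((d : ℝ) - (dG : ℝ)) / (dG : ℝ))) := by
  classical
  -- basic projection facts
  have hidem : ∀ i, P i * P i = P i := fun i => by simpa using hPorth i i
  set c : Fin M → ℝ := fun i => Real.exp (-(β * lam i)) with hc
  have hcpos : ∀ i, 0 < c i := fun i => Real.exp_pos _
  -- traces are nonneg reals
  set t : Fin M → ℝ := fun i => ((P i).trace).re with ht
  have htr : ∀ i, (P i).trace = ((t i : ℝ) : ℂ) := by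
    intro i
    have h0 := psd_trace_nonneg (proj_posSemidef (hPherm i) (hidem i))
    rw [Complex.le_def] at h0
    exact Complex.ext rfl h0.2.symm
  have htnonneg : ∀ i, 0 ≤ t i := by
    intro i
    have h0 := psd_trace_nonneg (proj_posSemidef (hPherm i) (hidem i))
    rw [Complex.le_def] at h0
    simpa using h0.1
  have hti0 : t i0 = (dG : ℝ) := by
    have := htr i0
    rw [hdG] at this
    exact_mod_cast this.symm
  have htsum : ∑ i, t i = (d : ℝ) := by
    have h1 : ∑ i, (P i).trace = (d : ℂ) := by
      rw [← Matrix.trace_sum, hPsum, Matrix.trace_one]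
      simp
    rw [Finset.sum_congr rfl fun i _ => htr i] at h1
    exact_mod_cast h1
  -- exponential
  have harg : (-(β : ℂ)) • H = ∑ i, ((-(β * lam i) : ℝ) : ℂ) • P i := by
    rw [hH, Finset.smul_sum]
    refine Finset.sum_congr rfl fun i _ => ?_
    rw [smul_smul]
    congr 1
    push_cast
    ring
  have hexp : NormedSpace.exp ((-(β : ℂ)) • H) = ∑ i, ((c i : ℝ) : ℂ) • P i := by
    rw [harg, exp_spectral _ P hPorth hPsum]
    refine Finset.sum_congr rfl fun i _ => ?_
    rw [← Complex.ofReal_exp]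
  set E : Matrix (Fin d) (Fin d) ℂ := ∑ i, ((c i : ℝ) : ℂ) • P i with hE
  -- partition function
  set Zr : ℝ := ∑ i, c i * t i with hZr
  have hEtrace : E.trace = ((Zr : ℝ) : ℂ) := by
    rw [hE, Matrix.trace_sum]
    rw [hZr]
    push_cast
    refine Finset.sum_congr rfl fun i _ => ?_
    rw [Matrix.trace_smul, htr i, smul_eq_mul]
  have hZrpos : 0 < Zr := by
    rw [hZr]
    refine Finset.sum_pos' (fun i _ => mul_nonneg (hcpos i).le (htnonneg i)) ⟨i0, Finset.mem_univ _, ?_⟩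
    rw [hti0]
    positivity

  -- sigma and its square root
  set s : ℝ := Real.sqrt ((dG : ℝ)⁻¹) with hs
  have hσ : ((P i0).trace)⁻¹ • P i0 = ((((dG : ℝ)⁻¹ : ℝ) : ℂ)) • P i0 := by
    rw [hdG]
    congr 1
    push_cast
    rfl
  have hms : msqrt (((P i0).trace)⁻¹ • P i0) = ((s : ℝ) : ℂ) • P i0 := by
    rw [hσ]
    exact msqrt_smul_proj (by positivity) (hPherm i0) (hidem i0)
  -- the middle matrix
  have hEP : E * P i0 = ((c i0 : ℝ) : ℂ) • P i0 := by
    rw [hE, Finset.sum_mul]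
    have h : ∀ i ∈ Finset.univ, (((c i : ℝ) : ℂ) • P i) * P i0
        = if i = i0 then ((c i0 : ℝ) : ℂ) • P i0 else 0 := by
      intro i _
      rw [smul_mul_assoc, hPorth]
      split_ifs with h
      · subst h; rfl
      · simp
    rw [Finset.sum_congr rfl h, Finset.sum_ite_eq' _ i0, if_pos (Finset.mem_univ _)]
  have hPEP : P i0 * E * P i0 = ((c i0 : ℝ) : ℂ) • P i0 := by
    rw [Matrix.mul_assoc, hEP, Matrix.mul_smul, hidem]
  set r : ℝ := (dG : ℝ)⁻¹ * Zr⁻¹ * c i0 with hr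
  have hrnonneg : 0 ≤ r := by
    rw [hr]
    have := (hcpos i0).le
    have := hZrpos.le
    positivity
  have hmid : (((s : ℝ) : ℂ) • P i0) * (((E.trace)⁻¹ • E)) * (((s : ℝ) : ℂ) • P i0)
      = ((r : ℝ) : ℂ) • P i0 := by
    rw [hEtrace]
    rw [Matrix.smul_mul, Matrix.mul_smul, Matrix.smul_mul, Matrix.mul_smul, Matrix.smul_mul]
    rw [hPEP]
    rw [smul_smul, smul_smul, smul_smul]
    congr 1
    have hss : ((s : ℝ) : ℂ) * ((s : ℝ) : ℂ) = (((dG : ℝ) : ℂ))⁻¹ := by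
      rw [← Complex.ofReal_mul, Real.mul_self_sqrt (by positivity), Complex.ofReal_inv]
    rw [hr, Complex.ofReal_mul, Complex.ofReal_mul, Complex.ofReal_inv, Complex.ofReal_inv,
      ← hss]
  -- compute the fidelity
  have hfid : fidelity (((NormedSpace.exp ((-(β : ℂ)) • H)).trace)⁻¹ •
          NormedSpace.exp ((-(β : ℂ)) • H)) (((P i0).trace)⁻¹ • P i0)
      = r * (dG : ℝ) ^ 2 := by
    rw [fidelity, hexp, hms, hmid]
    rw [msqrt_smul_proj hrnonneg (hPherm i0) (hidem i0)]
    rw [Matrix.trace_smul, hdG, smul_eq_mul]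
    have : ((Real.sqrt r : ℝ) : ℂ) * ((dG : ℕ) : ℂ) = ((Real.sqrt r * dG : ℝ) : ℂ) := by
      push_cast; ring
    rw [this, Complex.ofReal_re, mul_pow, Real.sq_sqrt hrnonneg]
  rw [hfid]
  -- the remaining real inequality
  have hc1 : Real.exp (-(β * (lam i1 - lam i0))) = c i1 / c i0 := by
    rw [show -(β * (lam i1 - lam i0)) = (-(β * lam i1)) - (-(β * lam i0)) by ring,
      Real.exp_sub]
  have hdGne : (dG : ℝ) ≠ 0 := by positivity
  have hfid2 : r * (dG : ℝ) ^ 2 = c i0 * (dG : ℝ) / Zr := by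
    rw [hr]; field_simp
  -- erase sums
  have herase_t : ∑ i ∈ Finset.univ.erase i0, t i = (d : ℝ) - (dG : ℝ) := by
    have := Finset.add_sum_erase Finset.univ t (Finset.mem_univ i0)
    rw [htsum, hti0] at this
    linarith
  have hd_dG : 0 ≤ (d : ℝ) - (dG : ℝ) := by
    rw [← herase_t]
    exact Finset.sum_nonneg fun i _ => htnonneg i
  have hkey : Zr ≤ c i0 * (dG : ℝ) + c i1 * ((d : ℝ) - (dG : ℝ)) := by
    have hsplit := Finset.add_sum_erase Finset.univ (fun i => c i * t i) (Finset.mem_univ i0)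
    rw [← hZr] at hsplit
    have hbound : ∑ i ∈ Finset.univ.erase i0, c i * t i
        ≤ ∑ i ∈ Finset.univ.erase i0, c i1 * t i := by
      refine Finset.sum_le_sum fun i hi => ?_
      have hine : i ≠ i0 := Finset.ne_of_mem_erase hi
      have h1le : i1 ≤ i := by
        rw [hi1]
        have : i.val ≠ 0 := by
          intro h
          apply hine
          rw [hi0]
          exact Fin.ext h
        exact Fin.mk_le_of_le_val (by omega)
      have hcle : c i ≤ c i1 := by
        apply Real.exp_le_exp.mpr
        have := hlam h1le
        nlinarith
      exact mul_le_mul_of_nonneg_right hcle (htnonneg i)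
    rw [← Finset.mul_sum, herase_t] at hbound
    have hsplit' : c i0 * t i0 + ∑ i ∈ Finset.univ.erase i0, c i * t i = Zr := hsplit
    rw [hti0] at hsplit'
    linarith
  have hZA : 0 < c i0 * (dG : ℝ) + c i1 * ((d : ℝ) - (dG : ℝ)) := lt_of_lt_of_le hZrpos hkey
  have hrhs : 1 + Real.exp (-(β * (lam i1 - lam i0))) * (((d : ℝ) - (dG : ℝ)) / (dG : ℝ))
      = (c i0 * (dG : ℝ) + c i1 * ((d : ℝ) - (dG : ℝ))) / (c i0 * (dG : ℝ)) := by
    rw [hc1]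
    field_simp
    rw [add_div, mul_div_cancel_left₀ _ (hcpos i0).ne']
  rw [hrhs, hfid2, one_div_div]
  exact div_le_div_of_nonneg_left (mul_nonneg (hcpos i0).le (by positivity)) hZrpos hkey
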